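/- arXiv:2005.08030 — 2 statements merged into one kernel-verified Lean document; each statement's English description precedes it below -/
import Mathlib

section
/- For the Hegselmann-Krause system with distributed delay dx_i/dt = (1/(N h(t))) Σ_{j≠i} ∫_{t-τ(t)}^t α(t-s) a_{ij}(t;s)(x_j(s) - x_i(t)) ds, with initial data x_i(s) = x_{i,0}(s) continuous on [-τ(0),0], and setting R := max_{s∈[-τ(0),0]} max_i |x_i(s)|, every solution satisfies max_i |x_i(t)| ≤ R for all t ≥ 0. -/
open Filter Set MeasureTheory intervalIntegral

open scoped Topology RealInnerProductSpace

/-!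
Barrier argument. Fix `δ > 0` and suppose some `‖x_i‖²` reaches the barrier `R² + δ(1 + t)`;
take the first time `T` at which one of them does. Up to `T`, and on the initial interval, every
agent lies in the closed ball of radius `‖x_i(T)‖`, so each term `x_j(s) - x_i(T)` of the velocity
points into that ball and `d/dt ‖x_i‖² = 2⟪x_i(T), ẋ_i(T)⟫ ≤ 0` at `T`. The barrier grows at
rate `δ > 0`, so it cannot have been reached from below. Letting `δ → 0` gives the bound.
-/

lemma HasDerivAt.nonneg_of_le_left {f : ℝ → ℝ} {f' a b : ℝ} (hab : a < b)
    (hf : HasDerivAt f f' b) (hle : ∀ t ∈ Ioo a b, f t ≤ f b) : 0 ≤ f' := by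
  have hslope : Tendsto (slope f b) (𝓝[<] b) (𝓝 f') :=
    (hasDerivAt_iff_tendsto_slope.1 hf).mono_left (nhdsWithin_mono _ fun t ht => ne_of_lt ht)
  refine ge_of_tendsto hslope ?_
  filter_upwards [Ioo_mem_nhdsLT hab] with t ht
  rw [slope_def_field]
  exact div_nonneg_of_nonpos (sub_nonpos.2 (hle t ht)) (sub_nonpos.2 ht.2.le)

lemma exists_first_zero_of_continuousOn {ι : Type*} [Finite ι] {f : ι → ℝ → ℝ} {a b : ℝ}
    (hab : a ≤ b) (hf : ∀ i, ContinuousOn (f i) (Icc a b)) (ha : ∀ i, f i a < 0) {i₀ : ι}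
    (hb : 0 ≤ f i₀ b) :
    ∃ T ∈ Ioc a b, ∃ i, f i T = 0 ∧ ∀ j, ∀ t ∈ Icc a T, f j t ≤ 0 := by
  set S := ⋃ i, Icc a b ∩ f i ⁻¹' Ici 0
  have hS : IsClosed S := isClosed_iUnion_of_finite fun i =>
    (hf i).preimage_isClosed_of_isClosed isClosed_Icc isClosed_Ici
  have hbS : b ∈ S := mem_iUnion.2 ⟨i₀, ⟨hab, le_rfl⟩, hb⟩
  have hSbdd : BddBelow S := ⟨a, fun t ht => by obtain ⟨i, ht, -⟩ := mem_iUnion.1 ht; exact ht.1⟩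
  obtain ⟨i, ⟨haT, hTb⟩, hiT⟩ := mem_iUnion.1 (hS.csInf_mem ⟨b, hbS⟩ hSbdd)
  set T := sInf S
  have hbefore : ∀ j, ∀ t ∈ Ico a T, f j t < 0 := fun j t ht => by
    by_contra! h
    exact (csInf_le hSbdd (mem_iUnion.2 ⟨j, ⟨ht.1, ht.2.le.trans hTb⟩, h⟩)).not_gt ht.2
  have haT' : a < T := haT.lt_of_ne fun h => (ha i).not_ge (h ▸ hiT)
  have hle : ∀ j, ∀ t ∈ Icc a T, f j t ≤ 0 := fun j => by
    rw [← closure_Ico haT'.ne]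
    refine le_on_closure (fun t ht => (hbefore j t ht).le) ?_ continuousOn_const
    rw [closure_Ico haT'.ne]
    exact (hf j).mono (Icc_subset_Icc_right hTb)
  exact ⟨T, ⟨haT', hTb⟩, i, le_antisymm (hle i T ⟨haT, le_rfl⟩) hiT, hle⟩

lemma inner_sub_self_nonpos_of_norm_le {E : Type*} [NormedAddCommGroup E]
    [InnerProductSpace ℝ E] {u y : E} (h : ‖y‖ ≤ ‖u‖) : ⟪u, y - u⟫ ≤ 0 := by
  rw [inner_sub_right, real_inner_self_eq_norm_mul_norm, sub_nonpos]
  exact (real_inner_le_norm u y).trans (mul_le_mul_of_nonneg_left h (norm_nonneg u))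

lemma inner_integral_smul_sub_nonpos {E : Type*} [NormedAddCommGroup E] [InnerProductSpace ℝ E]
    [CompleteSpace E] {u : E} {y : ℝ → E} {w : ℝ → ℝ} {a b : ℝ} (hab : a ≤ b)
    (hw : ∀ s ∈ Icc a b, 0 ≤ w s) (hy : ∀ s ∈ Icc a b, ‖y s‖ ≤ ‖u‖) :
    ⟪u, ∫ s in a..b, w s • (y s - u)⟫ ≤ 0 := by
  by_cases hint : IntervalIntegrable (fun s => w s • (y s - u)) volume a b
  · rw [← innerSL_apply_apply ℝ, ← (innerSL ℝ u).intervalIntegral_comp_comm hint, ← neg_nonneg,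
      ← intervalIntegral.integral_neg]
    refine intervalIntegral.integral_nonneg hab fun s hs => ?_
    rw [innerSL_apply_apply, real_inner_smul_right, neg_nonneg]
    exact mul_nonpos_of_nonneg_of_nonpos (hw s hs) (inner_sub_self_nonpos_of_norm_le (hy s hs))
  · rw [intervalIntegral.integral_undef hint, inner_zero_right]

lemma inner_smul_sum_integral_smul_sub_nonpos {ι E : Type*} [NormedAddCommGroup E]
    [InnerProductSpace ℝ E] [CompleteSpace E] {c : ℝ} (hc : 0 ≤ c) (s : Finset ι) {u : E}
    {y : ι → ℝ → E} {w : ι → ℝ → ℝ} {a b : ℝ} (hab : a ≤ b)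
    (hw : ∀ j ∈ s, ∀ σ ∈ Icc a b, 0 ≤ w j σ) (hy : ∀ j ∈ s, ∀ σ ∈ Icc a b, ‖y j σ‖ ≤ ‖u‖) :
    ⟪u, c • ∑ j ∈ s, ∫ σ in a..b, w j σ • (y j σ - u)⟫ ≤ 0 := by
  rw [real_inner_smul_right, inner_sum]
  exact mul_nonpos_of_nonneg_of_nonpos hc
    (Finset.sum_nonpos fun j hj => inner_integral_smul_sub_nonpos hab (hw j hj) (hy j hj))

section Barrier

variable {ι E : Type*} [Finite ι] [NormedAddCommGroup E] [InnerProductSpace ℝ E]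
  {y v : ι → ℝ → E} {r R : ℝ}

lemma norm_sq_lt_of_inner_deriv_nonpos (hr : 0 ≤ r)
    (hv : ∀ i, ∀ t ≥ 0, HasDerivAt (y i) (v i t) t)
    (hinward : ∀ i, ∀ t ≥ 0, (∀ j, ∀ s ∈ Icc (-r) t, ‖y j s‖ ≤ ‖y i t‖) → ⟪y i t, v i t⟫ ≤ 0)
    (hR : ∀ j, ∀ s ∈ Icc (-r) 0, ‖y j s‖ ≤ R) {δ : ℝ} (hδ : 0 < δ) :
    ∀ t ≥ 0, ∀ i, ‖y i t‖ ^ 2 < R ^ 2 + δ * (1 + t) := by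
  by_contra! h
  obtain ⟨t₀, ht₀, i₀, hi₀⟩ := h
  set b : ℝ → ℝ := fun t => R ^ 2 + δ * (1 + t) with hb
  have hRsq : ∀ j, ∀ s ∈ Icc (-r) 0, ‖y j s‖ ^ 2 ≤ R ^ 2 := fun j s hs =>
    pow_le_pow_left₀ (norm_nonneg _) (hR j s hs) 2
  have hy : ∀ j, ContinuousOn (y j) (Icc 0 t₀) := fun j t ht =>
    (hv j t ht.1).continuousAt.continuousWithinAt
  have hcont : ∀ j, ContinuousOn (fun t => ‖y j t‖ ^ 2 - b t) (Icc 0 t₀) := fun j =>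
    ((hy j).norm.pow 2).sub (by fun_prop)
  obtain ⟨T, ⟨hT, -⟩, i, hiT, hle⟩ := exists_first_zero_of_continuousOn ht₀ hcont
    (fun j => by linarith [hRsq j 0 ⟨by linarith, le_rfl⟩]) (i₀ := i₀) (by linarith)
  have hhist : ∀ j, ∀ s ∈ Icc (-r) T, ‖y j s‖ ≤ ‖y i T‖ := by
    intro j s hs
    rw [← sq_le_sq₀ (norm_nonneg _) (norm_nonneg _)]
    rcases le_total s 0 with hs0 | hs0
    · nlinarith [hRsq j s ⟨hs.1, hs0⟩]
    · nlinarith [hle j s ⟨hs0, hs.2⟩, hs.2]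
  have hb' : HasDerivAt b δ T := by
    simpa [hb] using (((hasDerivAt_id T).const_add 1).const_mul δ).const_add (R ^ 2)
  have hgrowth := ((hv i T hT.le).norm_sq.sub hb').nonneg_of_le_left hT fun t ht => by
    simpa [hiT] using hle i t ⟨ht.1.le, ht.2.le⟩
  linarith [hinward i T hT.le hhist]

lemma norm_le_of_inner_deriv_nonpos (hr : 0 ≤ r)
    (hv : ∀ i, ∀ t ≥ 0, HasDerivAt (y i) (v i t) t)
    (hinward : ∀ i, ∀ t ≥ 0, (∀ j, ∀ s ∈ Icc (-r) t, ‖y j s‖ ≤ ‖y i t‖) → ⟪y i t, v i t⟫ ≤ 0)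
    (hR : ∀ j, ∀ s ∈ Icc (-r) 0, ‖y j s‖ ≤ R) :
    ∀ t ≥ 0, ∀ i, ‖y i t‖ ≤ R := by
  intro t ht i
  have hR0 : 0 ≤ R := (norm_nonneg _).trans (hR i 0 ⟨by linarith, le_rfl⟩)
  rw [← sq_le_sq₀ (norm_nonneg _) hR0]
  refine le_of_forall_pos_lt_add fun ε hε => ?_
  have := norm_sq_lt_of_inner_deriv_nonpos hr hv hinward hR (δ := ε / (1 + t)) (by positivity)
    t ht i
  rwa [div_mul_cancel₀ _ (by positivity)] at this

end Barrier

theorem stmt1_general (d N : ℕ)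
    (x : Fin N → ℝ → EuclideanSpace ℝ (Fin d))
    (τ : ℝ → ℝ) (τstar : ℝ) (α : ℝ → ℝ)
    (a : Fin N → Fin N → ℝ → ℝ → ℝ) (R : ℝ)
    (hτpos : ∀ t ≥ (0:ℝ), τstar ≤ τ t) (hτstar : 0 < τstar)
    (hτmono : ∀ s t, (0:ℝ) ≤ s → s ≤ t → τ t ≤ τ s)
    (hα : ∀ s ∈ Set.Icc (0:ℝ) (τ 0), 0 ≤ α s)
    (ha_nonneg : ∀ i j t s, 0 ≤ a i j t s)
    -- the delayed Hegselmann–Krause dynamics, with h(t) = ∫_0^{τ(t)} α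
    (hODE : ∀ i, ∀ t ≥ (0:ℝ), HasDerivAt (x i)
      ((1 / ((N:ℝ) * ∫ σ in (0:ℝ)..τ t, α σ)) •
        ∑ j ∈ Finset.univ.erase i,
          ∫ s in (t - τ t)..t, (α (t - s) * a i j t s) • (x j s - x i t)) t)
    -- R is (an upper bound for) the max of the initial data
    (hR : ∀ s ∈ Set.Icc (-τ 0) 0, ∀ i, ‖x i s‖ ≤ R) :
    ∀ t ≥ (0:ℝ), ∀ i, ‖x i t‖ ≤ R := by
  have hτ_nonneg : ∀ t ≥ (0:ℝ), 0 ≤ τ t := fun t ht => hτstar.le.trans (hτpos t ht)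
  refine norm_le_of_inner_deriv_nonpos (hτ_nonneg 0 le_rfl) hODE ?_ fun j s hs => hR s hs j
  intro i t ht hhist
  have hτt : τ t ≤ τ 0 := hτmono 0 t le_rfl ht
  refine inner_smul_sum_integral_smul_sub_nonpos ?_ _ (by linarith [hτ_nonneg t ht])
    (fun j _ s hs => mul_nonneg (hα _ ⟨by linarith [hs.2], by linarith [hs.1]⟩) (ha_nonneg i j t s))
    (fun j _ s hs => hhist j s ⟨by linarith [hs.1], hs.2⟩)
  exact one_div_nonneg.2 (mul_nonneg N.cast_nonneg (intervalIntegral.integral_nonneg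
    (hτ_nonneg t ht) fun σ hσ => hα σ ⟨hσ.1, hσ.2.trans hτt⟩))

theorem stmt1 (d N : ℕ) (hN : 0 < N)
    (x : Fin N → ℝ → EuclideanSpace ℝ (Fin d))
    (τ : ℝ → ℝ) (τstar : ℝ) (α : ℝ → ℝ)
    (a : Fin N → Fin N → ℝ → ℝ → ℝ) (R : ℝ)
    (hτpos : ∀ t ≥ (0:ℝ), τstar ≤ τ t) (hτstar : 0 < τstar)
    (hτmono : ∀ s t, (0:ℝ) ≤ s → s ≤ t → τ t ≤ τ s)
    (hα : ∀ s ∈ Set.Icc (0:ℝ) (τ 0), 0 ≤ α s)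
    (hA : 0 < ∫ s in (0:ℝ)..τstar, α s)
    (ha_nonneg : ∀ i j t s, 0 ≤ a i j t s)
    (ha_bound : ∀ i t s, (1 / (N:ℝ)) * ∑ j, a i j t s ≤ 1)
    -- the delayed Hegselmann–Krause dynamics, with h(t) = ∫_0^{τ(t)} α
    (hODE : ∀ i, ∀ t ≥ (0:ℝ), HasDerivAt (x i)
      ((1 / ((N:ℝ) * ∫ σ in (0:ℝ)..τ t, α σ)) •
        ∑ j ∈ Finset.univ.erase i,
          ∫ s in (t - τ t)..t, (α (t - s) * a i j t s) • (x j s - x i t)) t)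
    -- continuity of the initial data and of the solution
    (hcont : ∀ i, Continuous (x i))
    -- R is (an upper bound for) the max of the initial data
    (hR : ∀ s ∈ Set.Icc (-τ 0) 0, ∀ i, ‖x i s‖ ≤ R) :
    ∀ t ≥ (0:ℝ), ∀ i, ‖x i t‖ ≤ R :=
  stmt1_general d N x τ τstar α a R hτpos hτstar hτmono hα ha_nonneg hODE hR
end

section
/- Let x_1,…,x_N ∈ ℝ^d with diameter d_X := max_{k,l}|x_k - x_l| attained at the pair (i,j), and let ψ_0 ∈ (0,1] satisfy ψ_0 ≤ a_k ≤ 1/ψ_0 for given coefficients a_k. Then (1/N) Σ_{k=1}^N a_k ⟨x_i - x_j, x_k - x_i⟩ ≤ ψ_0 (1/N) Σ_{k=1}^N ⟨x_i - x_j, x_k - x_i⟩, and the symmetric sum over both agents yields (1/N) Σ_k a_k (⟨x_i - x_j, x_k - x_i⟩ + ⟨x_i - x_j, x_j - x_k⟩) ≤ -ψ_0 |x_i - x_j|^2. -/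
/-!
Since `(i, j)` realizes the diameter, Cauchy–Schwarz makes every `⟪x i - x j, x k - x i⟫` and
`⟪x i - x j, x j - x k⟫` nonpositive, so the weights `a k ≥ ψ₀` may be replaced by `ψ₀`.
The two inner products telescope to `-‖x i - x j‖ ^ 2` for every `k`.
-/

open Finset RealInnerProductSpace

section DiameterPair

variable {E : Type*} [NormedAddCommGroup E] [InnerProductSpace ℝ E]

theorem inner_sub_sub_nonpos_of_norm_le {p q y : E} (h : ‖y - q‖ ≤ ‖p - q‖) :
    ⟪p - q, y - p⟫ ≤ 0 := by
  have hsplit : ⟪p - q, y - p⟫ = ⟪p - q, y - q⟫ - ‖p - q‖ * ‖p - q‖ := by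
    rw [← real_inner_self_eq_norm_mul_norm, ← inner_sub_right, sub_sub_sub_cancel_right]
  have hcs : ⟪p - q, y - q⟫ ≤ ‖p - q‖ * ‖p - q‖ :=
    (real_inner_le_norm _ _).trans (mul_le_mul_of_nonneg_left h (norm_nonneg _))
  linarith

theorem inner_sub_sub_nonpos_of_norm_le' {p q y : E} (h : ‖p - y‖ ≤ ‖p - q‖) :
    ⟪p - q, q - y⟫ ≤ 0 := by
  have h' : ‖y - p‖ ≤ ‖q - p‖ := by rwa [norm_sub_rev y, norm_sub_rev q]
  rw [← neg_sub q p, ← neg_sub y q, inner_neg_neg]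
  exact inner_sub_sub_nonpos_of_norm_le h'

theorem inner_sub_sub_add_inner_sub_sub (p q y : E) :
    ⟪p - q, y - p⟫ + ⟪p - q, q - y⟫ = -‖p - q‖ ^ 2 := by
  rw [← inner_add_right, show y - p + (q - y) = -(p - q) by abel, inner_neg_right,
    real_inner_self_eq_norm_sq]

end DiameterPair

theorem Finset.sum_mul_le_mul_sum_of_le_of_nonpos {ι : Type*} (s : Finset ι) {a t : ι → ℝ}
    {c : ℝ} (ha : ∀ k ∈ s, c ≤ a k) (ht : ∀ k ∈ s, t k ≤ 0) :
    ∑ k ∈ s, a k * t k ≤ c * ∑ k ∈ s, t k := by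
  rw [mul_sum]
  exact sum_le_sum fun k hk => mul_le_mul_of_nonpos_right (ha k hk) (ht k hk)

theorem average_mul_le_mul_average_of_le_of_nonpos {N : ℕ} {a t : Fin N → ℝ} {c : ℝ}
    (ha : ∀ k, c ≤ a k) (ht : ∀ k, t k ≤ 0) :
    (1 / (N : ℝ)) * ∑ k, a k * t k ≤ c * ((1 / (N : ℝ)) * ∑ k, t k) := by
  rw [mul_left_comm]
  exact mul_le_mul_of_nonneg_left
    (sum_mul_le_mul_sum_of_le_of_nonpos _ (fun k _ => ha k) (fun k _ => ht k)) (by positivity)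

theorem stmt5_general (d N : ℕ)
    (x : Fin N → EuclideanSpace ℝ (Fin d)) (i j : Fin N)
    (hmax : ∀ k l, ‖x k - x l‖ ≤ ‖x i - x j‖)
    (ψ₀ : ℝ)
    (a : Fin N → ℝ) (ha : ∀ k, ψ₀ ≤ a k ∧ a k ≤ 1 / ψ₀) :
    (1 / (N:ℝ)) * ∑ k, a k * inner ℝ (x i - x j) (x k - x i) ≤
      ψ₀ * ((1 / (N:ℝ)) * ∑ k, inner ℝ (x i - x j) (x k - x i)) ∧
    (1 / (N:ℝ)) * ∑ k, a k *
        ((inner ℝ (x i - x j) (x k - x i) : ℝ) + inner ℝ (x i - x j) (x j - x k)) ≤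
      -ψ₀ * ‖x i - x j‖ ^ 2 := by
  have hleft k : ⟪x i - x j, x k - x i⟫ ≤ 0 := inner_sub_sub_nonpos_of_norm_le (hmax k j)
  have hright k : ⟪x i - x j, x j - x k⟫ ≤ 0 := inner_sub_sub_nonpos_of_norm_le' (hmax i k)
  have hlow k : ψ₀ ≤ a k := (ha k).1
  refine ⟨average_mul_le_mul_average_of_le_of_nonpos hlow hleft, ?_⟩
  have hN : (N : ℝ) ≠ 0 := Nat.cast_ne_zero.mpr (Fin.pos i).ne'
  calc _ ≤ ψ₀ * ((1 / (N : ℝ)) * ∑ _k : Fin N, -‖x i - x j‖ ^ 2) := by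
        simpa only [inner_sub_sub_add_inner_sub_sub] using
          average_mul_le_mul_average_of_le_of_nonpos hlow fun k => add_nonpos (hleft k) (hright k)
    _ = -ψ₀ * ‖x i - x j‖ ^ 2 := by
        rw [sum_const, card_univ, Fintype.card_fin, nsmul_eq_mul]
        field_simp

theorem stmt5 (d N : ℕ) (hN : 0 < N)
    (x : Fin N → EuclideanSpace ℝ (Fin d)) (i j : Fin N)
    (hmax : ∀ k l, ‖x k - x l‖ ≤ ‖x i - x j‖)
    (ψ₀ : ℝ) (hψ₀ : 0 < ψ₀ ∧ ψ₀ ≤ 1)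
    (a : Fin N → ℝ) (ha : ∀ k, ψ₀ ≤ a k ∧ a k ≤ 1 / ψ₀) :
    (1 / (N:ℝ)) * ∑ k, a k * inner ℝ (x i - x j) (x k - x i) ≤
      ψ₀ * ((1 / (N:ℝ)) * ∑ k, inner ℝ (x i - x j) (x k - x i)) ∧
    (1 / (N:ℝ)) * ∑ k, a k *
        ((inner ℝ (x i - x j) (x k - x i) : ℝ) + inner ℝ (x i - x j) (x j - x k)) ≤
      -ψ₀ * ‖x i - x j‖ ^ 2 :=
  stmt5_general d N x i j hmax ψ₀ a ha
end
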